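/- Let E be a finite field and F a subfield with [E : F] = p. Let k ≥ 1 and let β_1, …, β_n ∈ E be distinct with n ≥ p + k. Let i* ∈ {1,…,n} satisfy F(β_{i*}) = E, and let R ⊆ {1,…,n}\{i*} satisfy |R| = p + k − 1 and β_j ∈ F for all j ∈ R. Define h(x) = ∏_{j ∉ R ∪ {i*}} (x − β_j) and v_j = ∏_{t ≠ j} (β_j − β_t)^{−1}. Then for any two polynomials f, g ∈ E[x] of degree at most k − 1: if tr_{E/F}(v_j · h(β_j) · f(β_j)) = tr_{E/F}(v_j · h(β_j) · g(β_j)) for all j ∈ R, then f(β_{i*}) = g(β_{i*}). In other words, the symbol f(β_{i*}) of the [n,k] Reed-Solomon codeword is determined by the |R| = p + k − 1 trace values {tr_{E/F}(v_j h(β_j) f(β_j)) : j ∈ R}, each of which is a single symbol of F. -/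

import Mathlib

/-! The multipliers `v j` are the nodal weights of all `n` points, so `∑ j, v j * P(β j) = 0`
whenever `deg P < n - 1` (the dual of a Reed–Solomon code is a generalized Reed–Solomon code).
Apply this to `P = h * (f - g) * Q` with `Q ∈ F[X]` of degree `< p`: `h` kills the terms outside
`R ∪ {i*}`, and for `j ∈ R` the factor `Q(β j)` lies in `F` and comes out of the trace. Hence
`tr(v i* * h(β i*) * (f - g)(β i*) * Q(β i*)) = 0`. As `β i*` generates `E` over `F`, the values
`Q(β i*)` exhaust `E`, so nondegeneracy of the trace form gives `(f - g)(β i*) = 0`. -/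

open Polynomial Finset

namespace Lagrange

variable {E ι : Type*} [Field E] [DecidableEq ι]

theorem sum_nodalWeight_mul_eval_eq_zero {s : Finset ι} {β : ι → E} (hβ : Set.InjOn β s)
    {P : E[X]} (hP : P.degree < ↑(#s - 1)) :
    ∑ i ∈ s, nodalWeight s β i * P.eval (β i) = 0 := by
  have hcoeff := coeff_eq_sum hβ (hP.trans_le (by exact_mod_cast Nat.sub_le _ 1))
  rw [coeff_eq_zero_of_degree_lt hP] at hcoeff
  simpa [nodalWeight, div_eq_mul_inv, prod_inv_distrib, mul_comm] using hcoeff.symm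

theorem sum_nodalWeight_mul_eval_nodal_compl_mul_eq_zero [Fintype ι] {β : ι → E}
    (hβ : Function.Injective β) (T : Finset ι) {P : E[X]} (hP : P.natDegree + 1 < #T) :
    ∑ j ∈ T, nodalWeight univ β j * (nodal (univ \ T) β * P).eval (β j) = 0 := by
  have hdeg : (nodal (univ \ T) β * P).degree < ↑(#(univ : Finset ι) - 1) := by
    have hT := T.card_le_univ
    have := natDegree_mul_le (p := nodal (univ \ T) β) (q := P)
    rw [natDegree_nodal, card_univ_sdiff] at this
    exact degree_le_natDegree.trans_lt (by rw [card_univ]; exact_mod_cast (by omega))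
  rw [← sum_nodalWeight_mul_eval_eq_zero hβ.injOn hdeg]
  refine sum_subset (subset_univ T) fun j _ hj => ?_
  rw [eval_mul, eval_nodal_at_node (mem_sdiff.2 ⟨mem_univ j, hj⟩), zero_mul, mul_zero]

end Lagrange

open Lagrange

theorem Algebra.trace_mul_aeval_algebraMap {F E : Type*} [Field F] [Field E] [Algebra F E]
    (c : E) (a : F) (q : F[X]) :
    Algebra.trace F E (c * aeval (algebraMap F E a) q) = q.eval a * Algebra.trace F E c := by
  rw [aeval_algebraMap_apply, coe_aeval_eq_eval, mul_comm, ← Algebra.smul_def, map_smul,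
    smul_eq_mul]

theorem PowerBasis.eq_zero_of_trace_mul_aeval_eq_zero {F E : Type*} [Field F] [Field E]
    [Algebra F E] [Algebra.IsSeparable F E] (pb : PowerBasis F E) {w : E}
    (hw : ∀ q : F[X], q.natDegree < pb.dim → Algebra.trace F E (w * aeval pb.gen q) = 0) :
    w = 0 := by
  have := pb.finite
  refine (traceForm_nondegenerate F E).1 w fun e => ?_
  obtain ⟨q, hq, rfl⟩ := pb.exists_eq_aeval e
  exact hw q hq

theorem trace_mul_aeval_eq_zero_of_trace_eq_zero {F E ι : Type*} [Field F] [Field E]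
    [Algebra F E] [Fintype ι] [DecidableEq ι] {β : ι → E} (hβ : Function.Injective β)
    {S : Finset ι} {i : ι} (hi : i ∉ S) {d : E[X]} {q : F[X]}
    (hdeg : d.natDegree + q.natDegree + 1 < #(insert i S))
    (hSF : ∀ j ∈ S, β j ∈ (algebraMap F E).range)
    (htr : ∀ j ∈ S, Algebra.trace F E (nodalWeight univ β j *
      (nodal (univ \ insert i S) β).eval (β j) * d.eval (β j)) = 0) :
    Algebra.trace F E (nodalWeight univ β i *
      (nodal (univ \ insert i S) β).eval (β i) * d.eval (β i) * aeval (β i) q) = 0 := by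
  have hdegP : (d * q.map (algebraMap F E)).natDegree + 1 < #(insert i S) := by
    have := natDegree_mul_le (p := d) (q := q.map (algebraMap F E))
    have := natDegree_map_le (f := algebraMap F E) (p := q)
    omega
  have hsum := sum_nodalWeight_mul_eval_nodal_compl_mul_eq_zero hβ _ hdegP
  simp only [eval_mul, eval_map_algebraMap, ← mul_assoc, sum_insert hi] at hsum
  have htrace := congrArg (Algebra.trace F E) hsum
  rwa [map_add, map_sum, map_zero, sum_eq_zero fun j hj => ?_, add_zero] at htrace
  obtain ⟨a, ha⟩ := hSF j hj
  rw [← ha, Algebra.trace_mul_aeval_algebraMap, ha, htr j hj, mul_zero]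

theorem symbol_determined_by_traces_general (F E : Type*) [Field F] [Field E] [Fintype E]
    [Algebra F E] (p k n : ℕ) (hp : Module.finrank F E = p)
    (hk : 1 ≤ k)
    (β : Fin n → E) (hβ : Function.Injective β)
    (istar : Fin n) (hgen : IntermediateField.adjoin F {β istar} = ⊤)
    (R : Finset (Fin n)) (histar : istar ∉ R) (hcard : R.card = p + k - 1)
    (hRF : ∀ j ∈ R, β j ∈ (algebraMap F E).range)
    (h : Polynomial E)
    (hh : h = ∏ j ∈ Finset.univ \ insert istar R, (Polynomial.X - Polynomial.C (β j)))
    (v : Fin n → E) (hv : ∀ j, v j = ∏ t ∈ Finset.univ.erase j, (β j - β t)⁻¹)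
    (f g : Polynomial E) (hf : f.degree ≤ (k - 1 : ℕ)) (hg : g.degree ≤ (k - 1 : ℕ))
    (htr : ∀ j ∈ R,
      Algebra.trace F E (v j * h.eval (β j) * f.eval (β j)) =
        Algebra.trace F E (v j * h.eval (β j) * g.eval (β j))) :
    f.eval (β istar) = g.eval (β istar) := by
  classical
  have : Finite F := Finite.of_injective _ (algebraMap F E).injective
  have hh' : h = nodal (univ \ insert istar R) β := hh
  have hv' : v = nodalWeight univ β := funext hv
  have hint : IsIntegral F (β istar) := .of_finite F _
  let pb := PowerBasis.ofAdjoinEqTop hint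
    ((IntermediateField.adjoin_simple_eq_top_iff_of_isAlgebraic hint.isAlgebraic).1 hgen)
  have hdim : pb.dim = p := by rw [← pb.finrank, hp]
  have hfg : (f - g).natDegree ≤ k - 1 :=
    natDegree_le_iff_degree_le.2 ((degree_sub_le f g).trans (max_le hf hg))
  have hc0 : v istar * h.eval (β istar) * (f - g).eval (β istar) = 0 := by
    refine pb.eq_zero_of_trace_mul_aeval_eq_zero fun q hq => ?_
    rw [hv', hh']
    refine trace_mul_aeval_eq_zero_of_trace_eq_zero hβ histar
      (by rw [card_insert_of_notMem histar]; omega) hRF fun j hj => ?_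
    rw [← hv', ← hh', eval_sub, mul_sub, map_sub, htr j hj, sub_self]
  have hv0 : v istar ≠ 0 := hv' ▸ nodalWeight_ne_zero hβ.injOn (mem_univ _)
  have hh0 : h.eval (β istar) ≠ 0 := hh' ▸ eval_nodal_not_at_node fun j hj =>
    hβ.ne (by rintro rfl; simp at hj)
  rw [← sub_eq_zero, ← eval_sub]
  simpa [hv0, hh0] using hc0

/-- Let `E` be a finite field, `F` a subfield with `[E : F] = p`, `k ≥ 1`,
`β 1, …, β n ∈ E` distinct with `n ≥ p + k`, `i*` an index with `F(β i*) = E`, and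
`R ⊆ [n] \ {i*}` with `|R| = p + k - 1` and `β j ∈ F` for all `j ∈ R`. With
`h(x) = ∏_{j ∉ R ∪ {i*}} (x - β j)` and `v j = ∏_{t ≠ j} (β j - β t)⁻¹`, for any two
polynomials `f, g ∈ E[x]` of degree at most `k - 1`: if
`tr_{E/F}(v j · h(β j) · f(β j)) = tr_{E/F}(v j · h(β j) · g(β j))` for all `j ∈ R`,
then `f(β i*) = g(β i*)`. -/
theorem symbol_determined_by_traces (F E : Type*) [Field F] [Field E] [Fintype E]
    [Algebra F E] (p k n : ℕ) (hp : Module.finrank F E = p)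
    (hk : 1 ≤ k) (hn : p + k ≤ n)
    (β : Fin n → E) (hβ : Function.Injective β)
    (istar : Fin n) (hgen : IntermediateField.adjoin F {β istar} = ⊤)
    (R : Finset (Fin n)) (histar : istar ∉ R) (hcard : R.card = p + k - 1)
    (hRF : ∀ j ∈ R, β j ∈ (algebraMap F E).range)
    (h : Polynomial E)
    (hh : h = ∏ j ∈ Finset.univ \ insert istar R, (Polynomial.X - Polynomial.C (β j)))
    (v : Fin n → E) (hv : ∀ j, v j = ∏ t ∈ Finset.univ.erase j, (β j - β t)⁻¹)
    (f g : Polynomial E) (hf : f.degree ≤ (k - 1 : ℕ)) (hg : g.degree ≤ (k - 1 : ℕ))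
    (htr : ∀ j ∈ R,
      Algebra.trace F E (v j * h.eval (β j) * f.eval (β j)) =
        Algebra.trace F E (v j * h.eval (β j) * g.eval (β j))) :
    f.eval (β istar) = g.eval (β istar) :=
  symbol_determined_by_traces_general F E p k n hp hk β hβ istar hgen R histar hcard hRF h hh v hv f
    g hf hg htr
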